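/- arXiv:1803.10674 — 2 statements merged into one kernel-verified Lean document; each statement's English description precedes it below -/
import Mathlib

section
/- Let X be a binomial random variable with parameters n and p such that np = m is a positive integer and m^2 = o(n) (concretely: assume m^2 ≤ n). Then P[X = m] ≥ 1/(4√m), provided n is sufficiently large relative to m (concretely: the bound P[X = m] ≥ (m^m/m!)·(1-p)^n holds, and combined with m! ≤ e^{1-m} m^{m+1/2} and (1-p)^n ≥ e^{-np-np^2} for p ≤ 1/2, yields P[X = m] ≥ 1/(4√m)). -/
/-!
For fixed `m`, the binomial probability with `n p = m` tends to the Poisson probability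
`e^{-m} m^m / m!` as `n → ∞`. Since the Stirling sequence `n! / (√(2n) (n/e)^n)` decreases from
its value `e / √2` at `n = 1`, we have `m! ≤ e √m (m/e)^m`, so this limit is at least
`1 / (e √m) > 1 / (4 √m)`.
-/

open Filter Real Nat

namespace Stirling

theorem stirlingSeq_le_exp_one_div_sqrt_two {n : ℕ} (hn : n ≠ 0) :
    stirlingSeq n ≤ exp 1 / √2 := by
  obtain ⟨k, rfl⟩ := exists_eq_succ_of_ne_zero hn
  rw [← stirlingSeq_one]
  exact stirlingSeq'_antitone (Nat.zero_le k)

theorem factorial_le_exp_one_mul_sqrt_mul_pow {n : ℕ} (hn : n ≠ 0) :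
    (n ! : ℝ) ≤ exp 1 * √n * (n / exp 1) ^ n := by
  have hsplit : exp 1 * √n * (n / exp 1) ^ n = exp 1 / √2 * (√(2 * n) * (n / exp 1) ^ n) := by
    rw [sqrt_mul zero_le_two]
    field_simp
  rw [hsplit, ← div_le_iff₀ (by positivity)]
  exact stirlingSeq_le_exp_one_div_sqrt_two hn

end Stirling

theorem one_div_four_mul_sqrt_lt_exp_neg_mul_pow_div_factorial {m : ℕ} (hm : m ≠ 0) :
    1 / (4 * √m) < exp (-m) * (m : ℝ) ^ m / m ! := by
  have hpow : ((m : ℝ) / exp 1) ^ m = exp (-m) * (m : ℝ) ^ m := by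
    rw [div_pow, exp_one_pow, exp_neg, div_eq_inv_mul]
  have hfac := Stirling.factorial_le_exp_one_mul_sqrt_mul_pow hm
  rw [hpow] at hfac
  calc 1 / (4 * √m) < 1 / (exp 1 * √m) := by
        gcongr
        exact exp_one_lt_d9.trans (by norm_num)
    _ ≤ exp (-m) * (m : ℝ) ^ m / m ! := by
        rw [div_le_div_iff₀ (by positivity) (by positivity)]
        linarith

/-- For X ~ Binomial(n, p) with p = m/n, m ≥ 1, m² ≤ n and n sufficiently
large relative to m, we have P[X = m] ≥ 1/(4√m). -/
theorem stmt_0 (m : ℕ) (hm : 1 ≤ m) :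
    ∃ N : ℕ, ∀ n : ℕ, N ≤ n → m ^ 2 ≤ n →
      (1 : ℝ) / (4 * Real.sqrt m) ≤
        (n.choose m : ℝ) * ((m : ℝ) / n) ^ m * (1 - (m : ℝ) / n) ^ (n - m) := by
  have hmean : Tendsto (fun n : ℕ => (n : ℝ) * (m / n)) atTop (nhds m) :=
    tendsto_const_nhds.congr' <| by
      filter_upwards [eventually_ne_atTop 0] with n hn
      field_simp
  obtain ⟨N, hN⟩ := eventually_atTop.1 <|
    (ProbabilityTheory.tendsto_choose_mul_pow_of_tendsto_mul_atTop m hmean).eventually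
      (eventually_gt_nhds (one_div_four_mul_sqrt_lt_exp_neg_mul_pow_div_factorial (by omega)))
  exact ⟨N, fun n hn _ => (hN n hn).le⟩
end

section
/- Let H be an r-graph on h vertices in which every (r-1)-subset of V(H) lies in at least 2 edges. Colour the complete r-graph K_n^r on vertex set [n] by assigning to each edge the (r-1)-set of its r-1 smallest elements. Then each colour class has fewer than n edges, and there is no rainbow copy of H in this colouring (i.e., no embedding of H into K_n^r all of whose edges receive distinct colours). -/
/-- Colour each r-set e of [n] by its r-1 smallest elements
(i.e. e minus its maximum). Every colour class has fewer than n edges, and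
if every (r-1)-subset of V(H) lies in at least 2 edges of H, then no
embedding of H into K_n^r is rainbow. -/
theorem stmt_10 (n r h : ℕ) (hr : 2 ≤ r) (hrh : r ≤ h) (hn : r ≤ n)
    (EH : Finset (Finset (Fin h))) (hEH : ∀ e ∈ EH, e.card = r)
    (hcov : ∀ I : Finset (Fin h), I.card = r - 1 →
      2 ≤ (EH.filter (fun e => I ⊆ e)).card) :
    (∀ I : Finset (Fin n),
      ((Finset.powersetCard r (Finset.univ : Finset (Fin n))).filter
        (fun e : Finset (Fin n) => e.filter (fun v => ∃ w ∈ e, v < w) = I)).card < n) ∧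
    (∀ φ : Fin h → Fin n, Function.Injective φ →
      ∃ e ∈ EH, ∃ f ∈ EH, e ≠ f ∧
        (e.image φ).filter (fun v => ∃ w ∈ e.image φ, v < w)
          = (f.image φ).filter (fun v => ∃ w ∈ f.image φ, v < w)) := by
  have hn0 : 0 < n := by omega
  constructor
  · intro I
    set C := ((Finset.powersetCard r (Finset.univ : Finset (Fin n))).filter
        (fun e : Finset (Fin n) => e.filter (fun v => ∃ w ∈ e, v < w) = I)) with hC
    have hmem : ∀ e ∈ C, e.card = r ∧ e.filter (fun v => ∃ w ∈ e, v < w) = I := by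
      intro e he
      rw [hC, Finset.mem_filter, Finset.mem_powersetCard] at he
      exact ⟨he.1.2, he.2⟩
    rcases C.eq_empty_or_nonempty with hE | ⟨e0, he0⟩
    · rw [hE]; simpa using hn0
    · have hne : ∀ e ∈ C, e.Nonempty := by
        intro e he
        have := (hmem e he).1
        exact Finset.card_pos.mp (by omega)
      -- each e in C equals insert (max e) I
      have hins : ∀ e ∈ C, ∀ (hne : e.Nonempty), e = insert (e.max' hne) I := by
        intro e he hne'
        have hI := (hmem e he).2
        ext v
        constructor
        · intro hv
          rcases eq_or_ne v (e.max' hne') with hv' | hv'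
          · simp [hv']
          · have : v ∈ e.filter (fun v => ∃ w ∈ e, v < w) := by
              refine Finset.mem_filter.mpr ⟨hv, ⟨e.max' hne', e.max'_mem hne',
                lt_of_le_of_ne (e.le_max' v hv) hv'⟩⟩
            rw [hI] at this
            simp [this]
        · intro hv
          rcases Finset.mem_insert.mp hv with hv' | hv'
          · rw [hv']; exact e.max'_mem hne'
          · rw [← hI] at hv'
            exact (Finset.mem_filter.mp hv').1
      -- a fixed element of I
      have hIne : I.Nonempty := by
        have h0 := (hmem e0 he0).1
        have hI0 := (hmem e0 he0).2
        obtain ⟨a, ha, b, hb, hab⟩ := Finset.one_lt_card.mp (show 1 < e0.card by omega)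
        rcases lt_or_gt_of_ne hab with hlt | hlt
        · exact ⟨a, by rw [← hI0]; exact Finset.mem_filter.mpr ⟨ha, b, hb, hlt⟩⟩
        · exact ⟨b, by rw [← hI0]; exact Finset.mem_filter.mpr ⟨hb, a, ha, hlt⟩⟩
      obtain ⟨a, ha⟩ := hIne
      have hmax : ∀ e ∈ C, ∀ (hne : e.Nonempty), e.max' hne ∈ (Finset.univ : Finset (Fin n)).erase a := by
        intro e he hne'
        have hI := (hmem e he).2
        have haI : a ∈ e.filter (fun v => ∃ w ∈ e, v < w) := by rw [hI]; exact ha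
        obtain ⟨hae, w, hw, haw⟩ := Finset.mem_filter.mp haI
        have : a < e.max' hne' := lt_of_lt_of_le haw (e.le_max' w hw)
        exact Finset.mem_erase.mpr ⟨ne_of_gt this, Finset.mem_univ _⟩
      have hinj : Set.InjOn (fun e : Finset (Fin n) => if hne : e.Nonempty then e.max' hne else ⟨0, hn0⟩) C := by
        intro e1 h1 e2 h2 heq
        have hne1 := hne e1 h1
        have hne2 := hne e2 h2
        simp only [dif_pos hne1, dif_pos hne2] at heq
        rw [hins e1 h1 hne1, hins e2 h2 hne2, heq]
      calc C.card ≤ ((Finset.univ : Finset (Fin n)).erase a).card := by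
            apply Finset.card_le_card_of_injOn _ _ hinj
            intro e he
            have hne' := hne e he
            simp only [dif_pos hne']
            exact hmax e he hne'
        _ < n := by
            rw [Finset.card_erase_of_mem (Finset.mem_univ a), Finset.card_univ, Fintype.card_fin]
            omega
  · intro φ hφ
    set T : Finset (Fin n) := Finset.univ.image φ with hTdef
    have hT : T.card = h := by
      rw [hTdef, Finset.card_image_of_injective _ hφ, Finset.card_univ, Fintype.card_fin]
    set g := T.orderIsoOfFin hT with hg
    set B : Finset (Fin n) :=
      (Finset.univ.filter (fun x : Fin h => (x : ℕ) < r - 1)).image (fun x => (g x : Fin n)) with hB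
    have hBsub : B ⊆ T := by
      intro b hb
      rw [hB] at hb
      obtain ⟨x, _, rfl⟩ := Finset.mem_image.mp hb
      exact (g x).2
    have hBmem : ∀ x : Fin h, (g x : Fin n) ∈ B ↔ (x : ℕ) < r - 1 := by
      intro x
      rw [hB]
      constructor
      · intro hx
        obtain ⟨y, hy, hyx⟩ := Finset.mem_image.mp hx
        have : y = x := by
          have := Subtype.coe_injective hyx
          exact g.injective this
        rw [← this]; exact (Finset.mem_filter.mp hy).2
      · intro hx
        exact Finset.mem_image.mpr ⟨x, Finset.mem_filter.mpr ⟨Finset.mem_univ _, hx⟩, rfl⟩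
    have hBcard : B.card = r - 1 := by
      rw [hB, Finset.card_image_of_injective _ (fun x y hxy =>
        g.injective (Subtype.coe_injective hxy))]
      have : (Finset.univ.filter (fun x : Fin h => (x : ℕ) < r - 1)) =
          Finset.map (Fin.castLEEmb (by omega : r - 1 ≤ h)) Finset.univ := by
        ext x
        simp only [Finset.mem_filter, Finset.mem_univ, true_and, Finset.mem_map,
          Fin.castLEEmb_apply]
        constructor
        · intro hx
          exact ⟨⟨(x : ℕ), hx⟩, rfl⟩
        · rintro ⟨y, rfl⟩
          simp only [Fin.coe_castLE]; exact y.2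
      rw [this, Finset.card_map, Finset.card_univ, Fintype.card_fin]
    -- the key ordering property
    have hkey : ∀ i j : Fin h, φ i ∈ B → φ j ∉ B → φ i < φ j := by
      intro i j hi hj
      have hiT : φ i ∈ T := Finset.mem_image_of_mem φ (Finset.mem_univ i)
      have hjT : φ j ∈ T := Finset.mem_image_of_mem φ (Finset.mem_univ j)
      set x := g.symm ⟨φ i, hiT⟩ with hx
      set y := g.symm ⟨φ j, hjT⟩ with hy
      have hgx : (g x : Fin n) = φ i := by rw [hx, OrderIso.apply_symm_apply]
      have hgy : (g y : Fin n) = φ j := by rw [hy, OrderIso.apply_symm_apply]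
      have hxlt : (x : ℕ) < r - 1 := (hBmem x).mp (by rw [hgx]; exact hi)
      have hyge : ¬ (y : ℕ) < r - 1 := fun hc => hj (by rw [← hgy]; exact (hBmem y).mpr hc)
      have hxy : x < y := by
        rw [Fin.lt_def]; omega
      have := g.strictMono hxy
      rw [← hgx, ← hgy]
      exact this
    set I : Finset (Fin h) := Finset.univ.filter (fun i => φ i ∈ B) with hI
    have hIimg : I.image φ = B := by
      ext b
      constructor
      · intro hb
        obtain ⟨i, hi, rfl⟩ := Finset.mem_image.mp hb
        exact (Finset.mem_filter.mp hi).2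
      · intro hb
        have hbT : b ∈ T := hBsub hb
        obtain ⟨i, _, rfl⟩ := Finset.mem_image.mp hbT
        exact Finset.mem_image.mpr ⟨i, Finset.mem_filter.mpr ⟨Finset.mem_univ _, hb⟩, rfl⟩
    have hIcard : I.card = r - 1 := by
      rw [← hBcard, ← hIimg, Finset.card_image_of_injective _ hφ]
    -- the colour of any edge containing I is φ '' I
    have hcol : ∀ e ∈ EH, I ⊆ e →
        (e.image φ).filter (fun v => ∃ w ∈ e.image φ, v < w) = I.image φ := by
      intro e he hIe
      have hecard : e.card = r := hEH e he
      have hdiff : (e \ I).card = 1 := by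
        rw [Finset.card_sdiff_of_subset hIe, hecard, hIcard]; omega
      obtain ⟨x0, hx0⟩ := Finset.card_eq_one.mp hdiff
      have hx0e : x0 ∈ e ∧ x0 ∉ I := by
        have : x0 ∈ e \ I := by rw [hx0]; exact Finset.mem_singleton_self _
        exact ⟨(Finset.mem_sdiff.mp this).1, (Finset.mem_sdiff.mp this).2⟩
      have houtside : ∀ i ∈ e, i ∉ I → i = x0 := by
        intro i hi hiI
        have : i ∈ e \ I := Finset.mem_sdiff.mpr ⟨hi, hiI⟩
        rw [hx0] at this
        exact Finset.mem_singleton.mp this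
      ext v
      simp only [Finset.mem_filter, Finset.mem_image]
      constructor
      · rintro ⟨⟨i, hi, rfl⟩, w, hw, hvw⟩
        obtain ⟨j, hj, rfl⟩ := hw
        by_contra hcon
        have hiI : i ∉ I := fun hiI => hcon ⟨i, hiI, rfl⟩
        have hiB : φ i ∉ B := fun hb => hiI (Finset.mem_filter.mpr ⟨Finset.mem_univ _, hb⟩)
        have hjI : j ∉ I := by
          intro hjI
          have hjB : φ j ∈ B := (Finset.mem_filter.mp hjI).2
          exact absurd (hkey j i hjB hiB) (not_lt.mpr (le_of_lt hvw))
        have hij : i = j := (houtside i hi hiI).trans (houtside j hj hjI).symm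
        exact absurd hvw (by rw [hij]; exact lt_irrefl _)
      · rintro ⟨i, hiI, rfl⟩
        have hiB : φ i ∈ B := (Finset.mem_filter.mp hiI).2
        have hx0B : φ x0 ∉ B := fun hb =>
          hx0e.2 (Finset.mem_filter.mpr ⟨Finset.mem_univ _, hb⟩)
        exact ⟨⟨i, hIe hiI, rfl⟩, ⟨φ x0, ⟨x0, hx0e.1, rfl⟩, hkey i x0 hiB hx0B⟩⟩
    have h2 := hcov I hIcard
    obtain ⟨e, he, f, hf, hef⟩ := Finset.one_lt_card.mp h2
    have he' := Finset.mem_filter.mp he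
    have hf' := Finset.mem_filter.mp hf
    exact ⟨e, he'.1, f, hf'.1, hef,
      (hcol e he'.1 he'.2).trans (hcol f hf'.1 hf'.2).symm⟩
end
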